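/- arXiv:1006.4859 — 2 statements merged into one kernel-verified Lean document; each statement's English description precedes it below -/
import Mathlib

section
/- Let Π = {Π_j} be a projective decomposition of the identity on H_a (orthogonal projectors summing to I_a) and let ρ_{abc} be a tripartite pure state. Then H(Π|c) := H({p_j}) − χ(Π, c) equals the quantum relative entropy S(ρ_{ab} ‖ ∑_j (Π_j ⊗ I_b) ρ_{ab} (Π_j ⊗ I_b)), where p_j = Tr(Π_j ρ_a) and χ(Π, c) = S(ρ_c) − ∑_j p_j S(ρ_{cj}) with p_j ρ_{cj} = Tr_{ab}((Π_j ⊗ I_{bc}) ρ_{abc}). -/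
open scoped Kronecker ComplexOrder
open Matrix

noncomputable section

variable {n : Type*} [Fintype n] [DecidableEq n]

/-- Apply a real function to a (Hermitian) matrix via the spectral theorem. -/
def matFun (f : ℝ → ℝ) (A : Matrix n n ℂ) : Matrix n n ℂ :=
  if h : A.IsHermitian then
    (h.eigenvectorUnitary : Matrix n n ℂ) *
      Matrix.diagonal (fun i => (f (h.eigenvalues i) : ℂ)) *
      (star (h.eigenvectorUnitary : Matrix n n ℂ))
  else 0

/-- Matrix logarithm (on the support; `log 0 = 0` in `Real.log`). -/
def matLog : Matrix n n ℂ → Matrix n n ℂ := matFun Real.log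

/-- Matrix square root via the spectral theorem. -/
def matSqrt : Matrix n n ℂ → Matrix n n ℂ := matFun Real.sqrt

/-- Von Neumann entropy `S(ρ) = -Tr(ρ log ρ)`. -/
def vN (ρ : Matrix n n ℂ) : ℝ := -(Matrix.trace (ρ * matLog ρ)).re

/-- Quantum relative entropy `S(A‖B) = Tr(A log A) - Tr(A log B)`. -/
def relEnt (A B : Matrix n n ℂ) : ℝ :=
  (Matrix.trace (A * matLog A)).re - (Matrix.trace (A * matLog B)).re

/-- Shannon entropy of a probability vector. -/
def shannon {ι : Type*} [Fintype ι] (p : ι → ℝ) : ℝ := -∑ j, p j * Real.log (p j)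

/-- Largest eigenvalue of a Hermitian matrix. -/
def maxEig (A : Matrix n n ℂ) : ℝ :=
  if h : A.IsHermitian then ⨆ i, h.eigenvalues i else 0

/-- Squared operator (sup) norm `‖A‖_∞² = λmax(AᴴA)`. -/
def opNormSq (A : Matrix n n ℂ) : ℝ := maxEig (Aᴴ * A)

/-- `r(P,Q) = max_{j,k} ‖√P_j √Q_k‖_∞²`. -/
def rOverlap {ι κ : Type*} [Fintype ι] [Fintype κ]
    (P : ι → Matrix n n ℂ) (Q : κ → Matrix n n ℂ) : ℝ :=
  ⨆ j, ⨆ k, opNormSq (matSqrt (P j) * matSqrt (Q k))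

/-- A density operator: positive semidefinite with unit trace. -/
def IsDensity (ρ : Matrix n n ℂ) : Prop := ρ.PosSemidef ∧ Matrix.trace ρ = 1

/-- A (finite) POVM. -/
def IsPOVM {ι : Type*} [Fintype ι] (P : ι → Matrix n n ℂ) : Prop :=
  (∀ j, (P j).PosSemidef) ∧ ∑ j, P j = 1

/-- A rank-1 POVM: every element is of the form `|x⟩⟨x|`. -/
def IsRankOnePOVM {ι : Type*} [Fintype ι] (P : ι → Matrix n n ℂ) : Prop :=
  IsPOVM P ∧ ∀ j, ∃ x : n → ℂ, P j = Matrix.vecMulVec x (star x)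

/-- The rank-one projector `|x⟩⟨x|` onto the vector `x`. -/
def projVec (x : n → ℂ) : Matrix n n ℂ := Matrix.vecMulVec x (star x)

/-- A family of unit vectors forming an orthonormal basis. -/
def IsONBasis (v : n → (n → ℂ)) : Prop :=
  ∀ j k, (∑ i, (starRingEnd ℂ) (v j i) * v k i) = if j = k then 1 else 0

/-- Two bases are mutually unbiased. -/
def IsMU (v w : n → (n → ℂ)) : Prop :=
  ∀ j k, ‖∑ i, (starRingEnd ℂ) (v j i) * w k i‖ ^ 2 = 1 / (Fintype.card n : ℝ)

/-- A pure state (a rank-one density operator). -/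
def IsPure (ρ : Matrix n n ℂ) : Prop :=
  ∃ ψ : n → ℂ, ρ = Matrix.vecMulVec ψ (star ψ)


/-- A projective decomposition of the identity: orthogonal projectors summing to `I`. -/
def IsProjDecomp {ι : Type*} [Fintype ι] (Pr : ι → Matrix n n ℂ) : Prop :=
  (∀ j, (Pr j).IsHermitian ∧ Pr j * Pr j = Pr j) ∧ ∑ j, Pr j = 1

variable {α β γ : Type*} [Fintype α] [DecidableEq α] [Fintype β] [DecidableEq β]
  [Fintype γ] [DecidableEq γ]

/-- Partial trace over the first factor. -/
def ptrFst (ρ : Matrix (α × β) (α × β) ℂ) : Matrix β β ℂ :=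
  Matrix.of fun j j' => ∑ i, ρ (i, j) (i, j')

/-- Partial trace over the second factor. -/
def ptrSnd (ρ : Matrix (α × β) (α × β) ℂ) : Matrix α α ℂ :=
  Matrix.of fun i i' => ∑ j, ρ (i, j) (i', j)

/-- `Tr_a[(P ⊗ I) ρ_{ab}]`, the unnormalized conditional state on `b`. -/
def condB (P : Matrix α α ℂ) (ρab : Matrix (α × β) (α × β) ℂ) : Matrix β β ℂ :=
  ptrFst ((P ⊗ₖ (1 : Matrix β β ℂ)) * ρab)

/-- Probability of POVM element `P` on the `a` part of `ρ_{ab}`. -/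
def probB (P : Matrix α α ℂ) (ρab : Matrix (α × β) (α × β) ℂ) : ℝ :=
  (Matrix.trace ((P ⊗ₖ (1 : Matrix β β ℂ)) * ρab)).re

/-- Holevo quantity `χ(P, b) = S(ρ_b) - ∑_j p_j S(ρ_{bj})`. -/
def holevo {ι : Type*} [Fintype ι] (P : ι → Matrix α α ℂ)
    (ρab : Matrix (α × β) (α × β) ℂ) : ℝ :=
  vN (ptrFst ρab) -
    ∑ j, probB (P j) ρab * vN ((probB (P j) ρab)⁻¹ • condB (P j) ρab)

/-- Missing information `H(P|b) = H({p_j}) - χ(P, b)`. -/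
def missing {ι : Type*} [Fintype ι] (P : ι → Matrix α α ℂ)
    (ρab : Matrix (α × β) (α × β) ℂ) : ℝ :=
  shannon (fun j => probB (P j) ρab) - holevo P ρab

/-- Tripartite reduction `ρ_{ab}` from `ρ_{abc}` (indices `α × β × γ`). -/
def redAB (ρ : Matrix (α × β × γ) (α × β × γ) ℂ) : Matrix (α × β) (α × β) ℂ :=
  Matrix.of fun x y => ∑ k, ρ (x.1, x.2, k) (y.1, y.2, k)

/-- Tripartite reduction `ρ_{ac}` from `ρ_{abc}`. -/
def redAC (ρ : Matrix (α × β × γ) (α × β × γ) ℂ) : Matrix (α × γ) (α × γ) ℂ :=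
  Matrix.of fun x y => ∑ j, ρ (x.1, j, x.2) (y.1, j, y.2)

/-- Tripartite reduction `ρ_a`. -/
def redA (ρ : Matrix (α × β × γ) (α × β × γ) ℂ) : Matrix α α ℂ :=
  ptrSnd (redAB ρ)

/-- Tripartite reduction `ρ_b`. -/
def redB (ρ : Matrix (α × β × γ) (α × β × γ) ℂ) : Matrix β β ℂ :=
  ptrFst (redAB ρ)

/-- Tripartite reduction `ρ_c`. -/
def redC (ρ : Matrix (α × β × γ) (α × β × γ) ℂ) : Matrix γ γ ℂ :=
  ptrFst (redAC ρ)

end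

/-!
Write the pure state as a vector `ψ` and read it as a matrix `M` from `c` to `ab`. Then
`ρ_ab = M Mᴴ` and `ρ_c = (Mᴴ M)ᵀ`; with `Q_j = Π_j ⊗ I_b`, the unnormalised conditional states are
`p_j ρ_cj = ((Q_j M)ᴴ (Q_j M))ᵀ` and the blocks of the pinched state `σ` are
`Q_j ρ_ab Q_j = (Q_j M)(Q_j M)ᴴ`. Since `X Xᴴ` and `Xᴴ X` have the same nonzero spectrum, the two
sides of each pair have the same entropy.

Because `σ` commutes with every `Q_j`, `Tr(ρ_ab log σ) = Tr(σ log σ)`, so the relative entropy is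
`S(σ) - S(ρ_ab) = ∑_j S(Q_j ρ_ab Q_j) - S(ρ_ab)`. On the other side the normalisation identity
`p_j S(ρ_cj) = S(p_j ρ_cj) + p_j log p_j` cancels the Shannon term and leaves
`H(Π|c) = ∑_j S(p_j ρ_cj) - S(ρ_c)`.
-/

open Polynomial in
theorem Polynomial.exists_eval_eqOn (f : ℝ → ℝ) {s : Set ℝ} (hs : s.Finite) :
    ∃ q : ℝ[X], Set.EqOn q.eval f s :=
  ⟨Lagrange.interpolate hs.toFinset id f, fun x hx => by
    simpa using Lagrange.eval_interpolate_at_node f (Set.injOn_id _) (hs.mem_toFinset.mpr hx)⟩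

namespace Matrix

open Polynomial

variable {n m ι : Type*} [Fintype n] [DecidableEq n] [Fintype m] [DecidableEq m] [Fintype ι]

theorem continuousOn_real_spectrum (f : ℝ → ℝ) (A : Matrix n n ℂ) :
    ContinuousOn f (spectrum ℝ A) :=
  A.finite_real_spectrum.continuousOn f

theorem cfc_eq_aeval_of_eqOn {f : ℝ → ℝ} {q : ℝ[X]} {A : Matrix n n ℂ} (hA : A.IsHermitian)
    (hq : Set.EqOn q.eval f (spectrum ℝ A)) : cfc f A = aeval A q :=
  have hA' : IsSelfAdjoint A := hA
  (cfc_congr hq.symm).trans (cfc_polynomial q A)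

theorem trace_aeval (A : Matrix n n ℂ) (q : ℝ[X]) :
    (aeval A q).trace = ∑ k ∈ Finset.range (q.natDegree + 1), q.coeff k • (A ^ k).trace := by
  simp only [aeval_eq_sum_range, trace_sum, trace_smul]

theorem trace_aeval_eq_sum_of_trace_pow {q : ℝ[X]} (hq : q.coeff 0 = 0) {A : Matrix n n ℂ}
    {B : ι → Matrix m m ℂ} (h : ∀ k ≠ 0, (A ^ k).trace = ∑ j, (B j ^ k).trace) :
    (aeval A q).trace = ∑ j, (aeval (B j) q).trace := by
  simp only [trace_aeval]
  rw [Finset.sum_comm]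
  refine Finset.sum_congr rfl fun k _ => ?_
  rcases eq_or_ne k 0 with rfl | hk
  · simp [hq]
  · rw [h k hk, Finset.smul_sum]

/-- Once `f 0 = 0`, `f` agrees on all the (finite) spectra with a polynomial without constant
term, so `Tr f(A)` only sees the traces of the positive powers of `A`. -/
theorem trace_cfc_eq_sum_of_trace_pow {f : ℝ → ℝ} (hf : f 0 = 0) {A : Matrix n n ℂ}
    (hA : A.IsHermitian) {B : ι → Matrix m m ℂ} (hB : ∀ j, (B j).IsHermitian)
    (h : ∀ k ≠ 0, (A ^ k).trace = ∑ j, (B j ^ k).trace) :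
    (cfc f A).trace = ∑ j, (cfc f (B j)).trace := by
  obtain ⟨q, hq⟩ := exists_eval_eqOn f <| ((Set.finite_singleton 0).union
    A.finite_real_spectrum).union (Set.finite_iUnion fun j => (B j).finite_real_spectrum)
  have hq0 : q.coeff 0 = 0 := by
    rw [coeff_zero_eq_eval_zero]
    exact (hq (by simp)).trans hf
  rw [cfc_eq_aeval_of_eqOn hA (hq.mono (Set.subset_union_right.trans Set.subset_union_left)),
    trace_aeval_eq_sum_of_trace_pow hq0 h]
  refine Finset.sum_congr rfl fun j _ => ?_
  rw [cfc_eq_aeval_of_eqOn (hB j) (hq.mono ?_)]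
  exact (Set.subset_iUnion (fun j => spectrum ℝ (B j)) j).trans Set.subset_union_right

theorem mul_pow_succ_eq {R : Type*} [Semiring R] (X : Matrix n m R) (Y : Matrix m n R) (k : ℕ) :
    (X * Y) ^ (k + 1) = X * (Y * X) ^ k * Y := by
  induction k with
  | zero => simp
  | succ k ih => rw [pow_succ, ih, pow_succ]; simp only [Matrix.mul_assoc]

theorem trace_pow_mul_comm {R : Type*} [CommSemiring R] (X : Matrix n m R) (Y : Matrix m n R)
    {k : ℕ} (hk : k ≠ 0) : ((X * Y) ^ k).trace = ((Y * X) ^ k).trace := by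
  obtain ⟨k, rfl⟩ := Nat.exists_eq_succ_of_ne_zero hk
  rw [mul_pow_succ_eq, trace_mul_cycle, ← pow_succ']

end Matrix

theorem Finset.sum_pow_of_pairwise_mul_eq_zero {R ι : Type*} [Semiring R] [Fintype ι]
    {S : ι → R} (hS : Pairwise fun j k => S j * S k = 0) {k : ℕ} (hk : k ≠ 0) :
    (∑ j, S j) ^ k = ∑ j, S j ^ k := by
  induction k with
  | zero => exact absurd rfl hk
  | succ k ih =>
    rcases eq_or_ne k 0 with rfl | hk'
    · simp
    rw [pow_succ, ih hk', Finset.sum_mul_sum]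
    refine Finset.sum_congr rfl fun j _ => ?_
    rw [Finset.sum_eq_single j, pow_succ]
    · intro l _ hlj
      obtain ⟨k, rfl⟩ := Nat.exists_eq_succ_of_ne_zero hk'
      rw [pow_succ, mul_assoc, hS hlj.symm, mul_zero]
    · simp

section Entropy

variable {n m ι : Type*} [Fintype n] [DecidableEq n] [Fintype m] [DecidableEq m] [Fintype ι]

theorem matFun_eq_cfc (f : ℝ → ℝ) (A : Matrix n n ℂ) : matFun f A = cfc f A := by
  by_cases hA : A.IsHermitian
  · rw [hA.cfc_eq, IsHermitian.cfc, Unitary.conjStarAlgAut_apply, matFun, dif_pos hA]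
    rfl
  · rw [matFun, dif_neg hA, cfc_apply_of_not_predicate A (p := IsSelfAdjoint) hA]

theorem mul_matLog_self {A : Matrix n n ℂ} (hA : A.IsHermitian) :
    A * matLog A = cfc (fun x => x * Real.log x) A := by
  have hA' : IsSelfAdjoint A := hA
  have h := cfc_mul id Real.log A (continuousOn_real_spectrum _ _)
    (continuousOn_real_spectrum _ _)
  rw [cfc_id ℝ A] at h
  rw [matLog, matFun_eq_cfc]
  exact h.symm

theorem vN_eq_neg_re_trace_cfc {A : Matrix n n ℂ} (hA : A.IsHermitian) :
    vN A = -(cfc (fun x => x * Real.log x) A).trace.re := by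
  rw [vN, mul_matLog_self hA]

theorem vN_eq_sum_of_trace_pow {A : Matrix n n ℂ} (hA : A.IsHermitian) {B : ι → Matrix m m ℂ}
    (hB : ∀ j, (B j).IsHermitian) (h : ∀ k ≠ 0, (A ^ k).trace = ∑ j, (B j ^ k).trace) :
    vN A = ∑ j, vN (B j) := by
  rw [vN_eq_neg_re_trace_cfc hA, trace_cfc_eq_sum_of_trace_pow (by simp) hA hB h,
    Complex.re_sum, ← Finset.sum_neg_distrib]
  exact Finset.sum_congr rfl fun j _ => (vN_eq_neg_re_trace_cfc (hB j)).symm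

theorem vN_eq_of_trace_pow {A : Matrix n n ℂ} (hA : A.IsHermitian) {B : Matrix m m ℂ}
    (hB : B.IsHermitian) (h : ∀ k ≠ 0, (A ^ k).trace = (B ^ k).trace) : vN A = vN B := by
  simpa using vN_eq_sum_of_trace_pow (ι := Unit) hA (fun _ => hB) (by simpa using h)

theorem vN_mul_conjTranspose_self (X : Matrix n m ℂ) : vN (X * Xᴴ) = vN (Xᴴ * X) :=
  vN_eq_of_trace_pow (isHermitian_mul_conjTranspose_self X)
    (isHermitian_conjTranspose_mul_self X) fun _ hk => trace_pow_mul_comm _ _ hk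

theorem vN_transpose {A : Matrix n n ℂ} (hA : A.IsHermitian) : vN Aᵀ = vN A :=
  vN_eq_of_trace_pow hA.transpose hA fun k _ => by rw [← transpose_pow, trace_transpose]

theorem vN_sum_of_pairwise_mul_eq_zero {S : ι → Matrix n n ℂ} (hS : ∀ j, (S j).IsHermitian)
    (horth : Pairwise fun j k => S j * S k = 0) : vN (∑ j, S j) = ∑ j, vN (S j) :=
  vN_eq_sum_of_trace_pow (isSelfAdjoint_sum _ fun j _ => hS j) hS fun _ hk => by
    rw [Finset.sum_pow_of_pairwise_mul_eq_zero horth hk, trace_sum]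

theorem vN_zero : vN (0 : Matrix n n ℂ) = 0 := by simp [vN]

theorem vN_smul {A : Matrix n n ℂ} (hA : A.IsHermitian) (c : ℝ) :
    vN (c • A) = c * vN A - c * Real.log c * A.trace.re := by
  have hA' : IsSelfAdjoint A := hA
  have hxlogx : (fun x => c * x * Real.log (c * x))
      = fun x => c * (x * Real.log x) + c * Real.log c * x := by
    funext x
    rcases eq_or_ne c 0 with rfl | hc
    · simp
    rcases eq_or_ne x 0 with rfl | hx
    · simp
    rw [Real.log_mul hc hx]
    ring
  have hcfc : cfc (fun x => x * Real.log x) (c • A)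
      = c • cfc (fun x => x * Real.log x) A + (c * Real.log c) • A := by
    rw [← cfc_comp_smul c _ A ((A.finite_real_spectrum.image _).continuousOn _)]
    simp only [smul_eq_mul, hxlogx]
    rw [cfc_add (a := A) _ _ (continuousOn_real_spectrum _ _) (continuousOn_real_spectrum _ _),
      cfc_const_mul _ _ A (continuousOn_real_spectrum _ _), cfc_const_mul_id _ A]
  rw [vN_eq_neg_re_trace_cfc (hA.smul (IsSelfAdjoint.all c)), hcfc, vN_eq_neg_re_trace_cfc hA]
  simp only [trace_add, trace_smul, Complex.add_re, Complex.smul_re, smul_eq_mul]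
  ring

theorem mul_vN_inv_smul {C : Matrix n n ℂ} (hC : C.PosSemidef) :
    C.trace.re * vN (C.trace.re⁻¹ • C) = vN C + C.trace.re * Real.log C.trace.re := by
  rcases eq_or_ne C.trace.re 0 with hp | hp
  · have hC0 : C = 0 :=
      hC.trace_eq_zero_iff.mp <| Complex.ext hp (Complex.nonneg_iff.mp hC.trace_nonneg).2.symm
    simp [hC0, vN_zero]
  · rw [vN_smul hC.1, Real.log_inv]
    field_simp
    ring

end Entropy

section Pinching

variable {n m ι : Type*} [Fintype n] [DecidableEq n] [Fintype m] [DecidableEq m] [Fintype ι]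
  {Q : ι → Matrix n n ℂ}

open scoped MatrixOrder in
/-- Sandwiching `1 = ∑ Q l` between two copies of `Q j` writes `Q j` as `Q j` plus a sum of
positive terms `(Q l * Q j)ᴴ * (Q l * Q j)`, which must therefore vanish. -/
theorem IsProjDecomp.mul_eq_zero (hQ : IsProjDecomp Q) : Pairwise fun j k => Q j * Q k = 0 := by
  classical
  intro k j hkj
  have hsq : ∀ l, (Q l * Q j)ᴴ * (Q l * Q j) = Q j * Q l * Q j := fun l => by
    rw [conjTranspose_mul, (hQ.1 j).1.eq, (hQ.1 l).1.eq, Matrix.mul_assoc, ← Matrix.mul_assoc (Q l),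
      (hQ.1 l).2, Matrix.mul_assoc]
  have htotal : ∑ l, (Q l * Q j)ᴴ * (Q l * Q j) = Q j := by
    simp_rw [hsq, ← Finset.sum_mul, ← Finset.mul_sum, hQ.2, Matrix.mul_one, (hQ.1 j).2]
  have hrest : ∑ l ∈ Finset.univ.erase j, (Q l * Q j)ᴴ * (Q l * Q j) = 0 := by
    have h := Finset.add_sum_erase Finset.univ (fun l => (Q l * Q j)ᴴ * (Q l * Q j))
      (Finset.mem_univ j)
    rw [htotal, hsq, (hQ.1 j).2, (hQ.1 j).2] at h
    exact add_eq_left.mp h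
  exact conjTranspose_mul_self_eq_zero.mp <|
    (Finset.sum_eq_zero_iff_of_nonneg fun l _ => star_mul_self_nonneg (Q l * Q j)).mp hrest k
      (Finset.mem_erase.mpr ⟨hkj, Finset.mem_univ k⟩)

theorem IsProjDecomp.kronecker_one (hQ : IsProjDecomp Q) :
    IsProjDecomp fun j => Q j ⊗ₖ (1 : Matrix m m ℂ) := by
  refine ⟨fun j => ⟨?_, ?_⟩, ?_⟩
  · rw [IsHermitian, conjTranspose_kronecker, (hQ.1 j).1.eq, conjTranspose_one]
  · rw [← mul_kronecker_mul, (hQ.1 j).2, Matrix.one_mul]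
  · have hsum : ∑ j, Q j ⊗ₖ (1 : Matrix m m ℂ) = (∑ j, Q j) ⊗ₖ (1 : Matrix m m ℂ) := by
      ext x y
      simp [Matrix.sum_apply, Finset.sum_mul]
    rw [hsum, hQ.2, one_kronecker_one]

theorem IsProjDecomp.commute_pinch (hQ : IsProjDecomp Q) (ρ : Matrix n n ℂ) (j : ι) :
    Commute (∑ k, Q k * ρ * Q k) (Q j) := by
  have hL : Q j * ∑ k, Q k * ρ * Q k = Q j * ρ * Q j := by
    rw [Finset.mul_sum, Finset.sum_eq_single j]
    · rw [← Matrix.mul_assoc, ← Matrix.mul_assoc, (hQ.1 j).2]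
    · intro k _ hkj
      rw [← Matrix.mul_assoc, ← Matrix.mul_assoc, hQ.mul_eq_zero hkj.symm]
      simp
    · simp
  have hR : (∑ k, Q k * ρ * Q k) * Q j = Q j * ρ * Q j := by
    rw [Finset.sum_mul, Finset.sum_eq_single j]
    · rw [Matrix.mul_assoc, (hQ.1 j).2]
    · intro k _ hkj
      rw [Matrix.mul_assoc, hQ.mul_eq_zero hkj, Matrix.mul_zero]
    · simp
  exact hR.trans hL.symm

theorem IsProjDecomp.trace_mul_eq_trace_pinch_mul (hQ : IsProjDecomp Q) (ρ : Matrix n n ℂ)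
    {F : Matrix n n ℂ} (hF : ∀ j, Commute (Q j) F) :
    (ρ * F).trace = ((∑ j, Q j * ρ * Q j) * F).trace := by
  calc (ρ * F).trace = ∑ j, (Q j * ρ * F).trace := by
        rw [← trace_sum, ← Finset.sum_mul, ← Finset.sum_mul, hQ.2, Matrix.one_mul]
    _ = ∑ j, (Q j * ρ * Q j * F).trace := Finset.sum_congr rfl fun j _ => by
        rw [Matrix.mul_assoc (Q j * ρ), (hF j).eq, ← Matrix.mul_assoc,
          trace_mul_comm (Q j * ρ * F), ← Matrix.mul_assoc, ← Matrix.mul_assoc, (hQ.1 j).2]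
    _ = _ := by rw [← trace_sum, Finset.sum_mul]

theorem IsProjDecomp.relEnt_pinch (hQ : IsProjDecomp Q) (ρ : Matrix n n ℂ) :
    relEnt ρ (∑ j, Q j * ρ * Q j) = vN (∑ j, Q j * ρ * Q j) - vN ρ := by
  have hcomm : ∀ j, Commute (Q j) (matLog (∑ k, Q k * ρ * Q k)) := fun j => by
    rw [matLog, matFun_eq_cfc]
    exact ((hQ.commute_pinch ρ j).cfc_real _).symm
  rw [relEnt, vN, vN, hQ.trace_mul_eq_trace_pinch_mul ρ hcomm]
  ring

theorem IsProjDecomp.vN_pinch (hQ : IsProjDecomp Q) {ρ : Matrix n n ℂ} (hρ : ρ.IsHermitian) :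
    vN (∑ j, Q j * ρ * Q j) = ∑ j, vN (Q j * ρ * Q j) := by
  refine vN_sum_of_pairwise_mul_eq_zero (fun j => ?_) fun j k hjk => ?_
  · simpa [(hQ.1 j).1.eq] using isHermitian_conjTranspose_mul_mul (Q j) hρ
  · dsimp only
    rw [show Q j * ρ * Q j * (Q k * ρ * Q k) = Q j * ρ * (Q j * Q k) * ρ * Q k by
      simp only [Matrix.mul_assoc], hQ.mul_eq_zero hjk]
    simp

end Pinching

section Projectors

variable {n k ι : Type*} [Fintype n] [DecidableEq n] [Fintype ι] {Q : ι → Matrix n n ℂ}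

theorem IsProjDecomp.conjTranspose_mul_mul (hQ : IsProjDecomp Q) (M : Matrix n k ℂ) (j : ι) :
    Mᴴ * Q j * M = (Q j * M)ᴴ * (Q j * M) := by
  rw [conjTranspose_mul, (hQ.1 j).1.eq, ← Matrix.mul_assoc, Matrix.mul_assoc Mᴴ (Q j) (Q j),
    (hQ.1 j).2]

theorem IsProjDecomp.mul_mul_conjTranspose [Fintype k] (hQ : IsProjDecomp Q)
    (M : Matrix n k ℂ) (j : ι) : Q j * (M * Mᴴ) * Q j = Q j * M * (Q j * M)ᴴ := by
  rw [conjTranspose_mul, (hQ.1 j).1.eq]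
  simp only [Matrix.mul_assoc]

end Projectors

section PartialTrace

variable {α β ι : Type*} [Fintype α] [Fintype β] [Fintype ι]

theorem trace_ptrFst (ρ : Matrix (α × β) (α × β) ℂ) : (ptrFst ρ).trace = ρ.trace := by
  simp only [ptrFst, trace, diag, of_apply, Fintype.sum_prod_type]
  exact Finset.sum_comm

variable [DecidableEq β]

theorem probB_eq_re_trace_condB (P : Matrix α α ℂ) (ρ : Matrix (α × β) (α × β) ℂ) :
    probB P ρ = (condB P ρ).trace.re := by
  rw [condB, trace_ptrFst, probB]

theorem ptrFst_eq_condB_one [DecidableEq α] (ρ : Matrix (α × β) (α × β) ℂ) :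
    ptrFst ρ = condB 1 ρ := by
  rw [condB, one_kronecker_one, Matrix.one_mul]

theorem missing_eq_sum_vN_condB_sub_vN {P : ι → Matrix α α ℂ} {ρ : Matrix (α × β) (α × β) ℂ}
    (hC : ∀ j, (condB (P j) ρ).PosSemidef) :
    missing P ρ = ∑ j, vN (condB (P j) ρ) - vN (ptrFst ρ) := by
  simp only [missing, holevo, shannon, probB_eq_re_trace_condB, mul_vN_inv_smul (hC _),
    Finset.sum_add_distrib]
  ring

end PartialTrace

section PureState

variable {α β γ : Type*} [Fintype γ]

def amplitudeMatrix (ψ : α × β × γ → ℂ) : Matrix (α × β) γ ℂ :=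
  Matrix.of fun x k => ψ (x.1, x.2, k)

theorem redAB_vecMulVec (ψ : α × β × γ → ℂ) :
    redAB (vecMulVec ψ (star ψ)) = amplitudeMatrix ψ * (amplitudeMatrix ψ)ᴴ := by
  ext x y
  simp [redAB, amplitudeMatrix, mul_apply, vecMulVec_apply]

variable [Fintype α] [Fintype β] [DecidableEq β] [DecidableEq γ]

theorem condB_redAC_vecMulVec (P : Matrix α α ℂ) (ψ : α × β × γ → ℂ) :
    condB P (redAC (vecMulVec ψ (star ψ)))
      = ((amplitudeMatrix ψ)ᴴ * (P ⊗ₖ (1 : Matrix β β ℂ)) * amplitudeMatrix ψ)ᵀ := by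
  ext k k'
  simp only [condB, ptrFst, redAC, vecMulVec_apply, Pi.star_apply, RCLike.star_def, mul_apply,
    kroneckerMap_apply, one_apply, mul_ite, mul_one, mul_zero, of_apply, Finset.mul_sum, ite_mul,
    zero_mul, Finset.sum_ite_irrel, Finset.sum_const_zero, Fintype.sum_prod_type,
    Finset.sum_ite_eq, Finset.mem_univ, ↓reduceIte, amplitudeMatrix, transpose_apply,
    conjTranspose_apply, Finset.sum_ite_eq', Finset.sum_mul]
  rw [Finset.sum_comm]
  refine Finset.sum_congr rfl fun a _ => ?_
  rw [Finset.sum_comm]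
  exact Finset.sum_congr rfl fun b _ => Finset.sum_congr rfl fun a' _ => by ring

theorem ptrFst_redAC_vecMulVec [DecidableEq α] (ψ : α × β × γ → ℂ) :
    ptrFst (redAC (vecMulVec ψ (star ψ))) = ((amplitudeMatrix ψ)ᴴ * amplitudeMatrix ψ)ᵀ := by
  rw [ptrFst_eq_condB_one, condB_redAC_vecMulVec, one_kronecker_one, Matrix.mul_one]

end PureState

theorem missing_info_eq_relEnt_pinch_general {α β γ ι : Type*}
    [Fintype α] [DecidableEq α] [Fintype β] [DecidableEq β] [Fintype γ] [DecidableEq γ]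
    [Fintype ι]
    (ρ : Matrix (α × β × γ) (α × β × γ) ℂ) (hpure : IsPure ρ)
    (Pr : ι → Matrix α α ℂ) (hPr : IsProjDecomp Pr) :
    missing Pr (redAC ρ) =
      relEnt (redAB ρ)
        (∑ j, (Pr j ⊗ₖ (1 : Matrix β β ℂ)) * redAB ρ * (Pr j ⊗ₖ (1 : Matrix β β ℂ))) := by
  obtain ⟨ψ, rfl⟩ := hpure
  have hQ : IsProjDecomp fun j => Pr j ⊗ₖ (1 : Matrix β β ℂ) := hPr.kronecker_one
  have hC : ∀ j, condB (Pr j) (redAC (vecMulVec ψ (star ψ)))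
      = (((Pr j ⊗ₖ (1 : Matrix β β ℂ)) * amplitudeMatrix ψ)ᴴ *
          ((Pr j ⊗ₖ (1 : Matrix β β ℂ)) * amplitudeMatrix ψ))ᵀ := fun j => by
    rw [condB_redAC_vecMulVec, hQ.conjTranspose_mul_mul]
  have hCpsd : ∀ j, (condB (Pr j) (redAC (vecMulVec ψ (star ψ)))).PosSemidef := fun j => by
    rw [hC j]
    exact (posSemidef_conjTranspose_mul_self _).transpose
  have hAB : (redAB (vecMulVec ψ (star ψ))).IsHermitian := by
    rw [redAB_vecMulVec]
    exact isHermitian_mul_conjTranspose_self _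
  rw [missing_eq_sum_vN_condB_sub_vN hCpsd, hQ.relEnt_pinch, hQ.vN_pinch hAB,
    ptrFst_redAC_vecMulVec, redAB_vecMulVec]
  simp only [hC, hQ.mul_mul_conjTranspose, vN_transpose (isHermitian_conjTranspose_mul_self _),
    vN_mul_conjTranspose_self]

/-- for a tripartite pure state and a projective decomposition `Π` of `I_a`,
`H(Π|c)` equals the relative entropy of `ρ_{ab}` to its pinched version. -/
theorem missing_info_eq_relEnt_pinch {α β γ ι : Type*}
    [Fintype α] [DecidableEq α] [Fintype β] [DecidableEq β] [Fintype γ] [DecidableEq γ]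
    [Fintype ι]
    (ρ : Matrix (α × β × γ) (α × β × γ) ℂ) (hρ : IsDensity ρ) (hpure : IsPure ρ)
    (Pr : ι → Matrix α α ℂ) (hPr : IsProjDecomp Pr) :
    missing Pr (redAC ρ) =
      relEnt (redAB ρ)
        (∑ j, (Pr j ⊗ₖ (1 : Matrix β β ℂ)) * redAB ρ * (Pr j ⊗ₖ (1 : Matrix β β ℂ))) :=
  missing_info_eq_relEnt_pinch_general ρ hpure Pr hPr
end

section
/- (Qubit three-MUB uncertainty relation with mixedness) For any density operator ρ on a two-dimensional Hilbert space and the three mutually unbiased bases x, y, z (eigenbases of the Pauli operators), H(x) + H(y) + H(z) ≥ 2 log 2 + S(ρ), where H(·) denotes the Shannon entropy of the measurement outcome distribution and S is the von Neumann entropy. -/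
open scoped Kronecker ComplexOrder
open Matrix

/-- The eigenbasis of the Pauli `Z` operator (standard basis). -/
noncomputable def zBasis : Fin 2 → Fin 2 → ℂ := ![![1, 0], ![0, 1]]

/-- The eigenbasis of the Pauli `X` operator. -/
noncomputable def xBasis : Fin 2 → Fin 2 → ℂ :=
  ![![((Real.sqrt 2 : ℂ))⁻¹, ((Real.sqrt 2 : ℂ))⁻¹],
    ![((Real.sqrt 2 : ℂ))⁻¹, -((Real.sqrt 2 : ℂ))⁻¹]]

/-- The eigenbasis of the Pauli `Y` operator. -/
noncomputable def yBasis : Fin 2 → Fin 2 → ℂ :=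
  ![![((Real.sqrt 2 : ℂ))⁻¹, Complex.I * ((Real.sqrt 2 : ℂ))⁻¹],
    ![((Real.sqrt 2 : ℂ))⁻¹, -Complex.I * ((Real.sqrt 2 : ℂ))⁻¹]]



/-! With `h` the binary entropy, the defect `D t = log 2 - h ((1 + √t) / 2)` is convex on
`[0, 1]`: at `s = √t` its derivative is `(log (1 + s) - log (1 - s)) / (4 s)`, a secant slope
through `0` of the convex function `log (1 + s) - log (1 - s)`. As `D 0 = 0`, `D` is
superadditive. If `r` is the Bloch vector of `ρ`, the outcome distribution of the Pauli basis `σ`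
has entropy `log 2 - D (r_σ ^ 2)`, and the eigenvalues `(1 ± |r|) / 2` of `ρ` give
`S(ρ) = log 2 - D (|r| ^ 2)`; so the claim is
`D (r_x ^ 2) + D (r_y ^ 2) + D (r_z ^ 2) ≤ D (|r| ^ 2)`. -/

open Real Set

lemma ConvexOn.add_le_of_map_zero {𝕜 : Type*} [Field 𝕜] [LinearOrder 𝕜]
    [IsStrictOrderedRing 𝕜] {s : Set 𝕜} {f : 𝕜 → 𝕜} (hf : ConvexOn 𝕜 s f) (h0 : (0 : 𝕜) ∈ s)
    (hf0 : f 0 = 0) {x y : 𝕜} (hx : 0 ≤ x) (hy : 0 ≤ y) (hxy : x + y ∈ s) :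
    f x + f y ≤ f (x + y) := by
  rcases (add_nonneg hx hy).eq_or_lt with hsum | hsum
  · obtain ⟨rfl, rfl⟩ : x = 0 ∧ y = 0 := ⟨by linarith, by linarith⟩
    simp [hf0]
  have le_frac {u v : 𝕜} (hu : 0 ≤ u) (hv : 0 ≤ v) (huv : u + v = x + y) :
      f u ≤ u / (x + y) * f (x + y) := by
    have := hf.2 hxy h0 (div_nonneg hu hsum.le) (div_nonneg hv hsum.le)
      (by rw [← add_div, huv, div_self hsum.ne'])
    simpa [hf0, div_mul_cancel₀ _ hsum.ne'] using this
  calc f x + f y ≤ x / (x + y) * f (x + y) + y / (x + y) * f (x + y) :=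
        add_le_add (le_frac hx hy rfl) (le_frac hy hx (add_comm y x))
    _ = f (x + y) := by rw [← add_mul, ← add_div, div_self hsum.ne', one_mul]

lemma hasDerivAt_log_one_add_sub_log_one_sub {s : ℝ} (hs : s ∈ Ioo (-1) 1) :
    HasDerivAt (fun s => log (1 + s) - log (1 - s)) (2 / (1 - s ^ 2)) s := by
  obtain ⟨hs₀, hs₁⟩ := hs
  have h : HasDerivAt (fun s => log (1 + s) - log (1 - s)) (1 / (1 + s) - -1 / (1 - s)) s :=
    (((hasDerivAt_id' s).const_add 1).log (by linarith)).sub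
      (((hasDerivAt_id' s).const_sub 1).log (by linarith))
  refine h.congr_deriv ?_
  have : 1 + s ≠ 0 := by linarith
  have : 1 - s ≠ 0 := by linarith
  have : 1 - s ^ 2 ≠ 0 := by nlinarith
  field_simp
  ring

lemma convexOn_log_one_add_sub_log_one_sub :
    ConvexOn ℝ (Ico 0 1) (fun s => log (1 + s) - log (1 - s)) := by
  have hderiv {s : ℝ} (hs : s ∈ Ico 0 1) := hasDerivAt_log_one_add_sub_log_one_sub
    ⟨by linarith [hs.1], hs.2⟩
  refine MonotoneOn.convexOn_of_deriv (convex_Ico 0 1)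
    (fun s hs => (hderiv hs).continuousAt.continuousWithinAt)
    (fun s hs => (hderiv (interior_subset hs)).differentiableAt.differentiableWithinAt) ?_
  rw [interior_Ico]
  intro a ha b hb hab
  rw [(hderiv (Ioo_subset_Ico_self ha)).deriv, (hderiv (Ioo_subset_Ico_self hb)).deriv]
  have : 0 < 1 - b ^ 2 := by nlinarith [hb.1, hb.2]
  gcongr
  exact ha.1.le

lemma monotoneOn_log_one_add_sub_log_one_sub_div :
    MonotoneOn (fun s => (log (1 + s) - log (1 - s)) / s) (Ioo 0 1) := by
  have h := convexOn_log_one_add_sub_log_one_sub.monotoneOn_slope_gt (left_mem_Ico.2 one_pos)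
  intro a ha b hb hab
  have := h ⟨Ioo_subset_Ico_self ha, ha.1⟩ ⟨Ioo_subset_Ico_self hb, hb.1⟩ hab
  simpa [slope_def_field] using this

lemma sqrt_mem_Ioo_zero_one {t : ℝ} (ht : t ∈ Ioo 0 1) : √t ∈ Ioo 0 1 :=
  ⟨sqrt_pos.2 ht.1, (sqrt_lt' one_pos).2 (by rw [one_pow]; exact ht.2)⟩

lemma binEntropy_one_add_abs_div_two (s : ℝ) :
    binEntropy ((1 + |s|) / 2) = binEntropy ((1 + s) / 2) := by
  rcases abs_choice s with h | h
  · rw [h]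
  · rw [h, ← binEntropy_one_sub]
    ring_nf

noncomputable def entropyDefect (t : ℝ) : ℝ := log 2 - binEntropy ((1 + √t) / 2)

lemma entropyDefect_zero : entropyDefect 0 = 0 := by
  rw [entropyDefect, sqrt_zero, add_zero, one_div, binEntropy_two_inv, sub_self]

lemma continuous_entropyDefect : Continuous entropyDefect := by
  unfold entropyDefect
  fun_prop

lemma binEntropy_one_add_div_two (s : ℝ) :
    binEntropy ((1 + s) / 2) = log 2 - entropyDefect (s ^ 2) := by
  rw [entropyDefect, sqrt_sq_eq_abs, sub_sub_cancel, binEntropy_one_add_abs_div_two]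

lemma hasDerivAt_entropyDefect {t : ℝ} (ht : t ∈ Ioo 0 1) :
    HasDerivAt entropyDefect ((log (1 + √t) - log (1 - √t)) / √t / 4) t := by
  obtain ⟨hs₀, hs₁⟩ := sqrt_mem_Ioo_zero_one ht
  have hp := ((hasDerivAt_sqrt ht.1.ne').const_add 1).div_const 2
  have h := ((hasDerivAt_binEntropy (p := (1 + √t) / 2) (by positivity) (by linarith)).comp t
    hp).const_sub (log 2)
  refine h.congr_deriv ?_
  rw [show 1 - (1 + √t) / 2 = (1 - √t) / 2 by ring, log_div (by linarith) two_ne_zero,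
    log_div (by linarith) two_ne_zero]
  field_simp
  ring

lemma convexOn_entropyDefect : ConvexOn ℝ (Icc 0 1) entropyDefect := by
  refine MonotoneOn.convexOn_of_deriv (convex_Icc 0 1) continuous_entropyDefect.continuousOn
    ?_ ?_ <;> rw [interior_Icc]
  · exact fun t ht => (hasDerivAt_entropyDefect ht).differentiableAt.differentiableWithinAt
  · intro a ha b hb hab
    rw [(hasDerivAt_entropyDefect ha).deriv, (hasDerivAt_entropyDefect hb).deriv]
    have hsqrt := monotoneOn_log_one_add_sub_log_one_sub_div (sqrt_mem_Ioo_zero_one ha)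
      (sqrt_mem_Ioo_zero_one hb) (sqrt_le_sqrt hab)
    exact div_le_div_of_nonneg_right hsqrt (by norm_num)

theorem two_mul_log_two_add_binEntropy_le {a b c : ℝ} (h : a ^ 2 + b ^ 2 + c ^ 2 ≤ 1) :
    2 * log 2 + binEntropy ((1 + √(a ^ 2 + b ^ 2 + c ^ 2)) / 2) ≤
      binEntropy ((1 + a) / 2) + binEntropy ((1 + b) / 2) + binEntropy ((1 + c) / 2) := by
  have superadd {x y : ℝ} (hx : 0 ≤ x) (hy : 0 ≤ y) (hxy : x + y ≤ 1) :=
    convexOn_entropyDefect.add_le_of_map_zero (left_mem_Icc.2 zero_le_one) entropyDefect_zero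
      hx hy ⟨add_nonneg hx hy, hxy⟩
  have hab := superadd (sq_nonneg a) (sq_nonneg b) (by nlinarith [sq_nonneg c])
  have habc := superadd (add_nonneg (sq_nonneg a) (sq_nonneg b)) (sq_nonneg c) h
  have hlhs : binEntropy ((1 + √(a ^ 2 + b ^ 2 + c ^ 2)) / 2) =
      log 2 - entropyDefect (a ^ 2 + b ^ 2 + c ^ 2) :=
    (sub_sub_cancel _ _).symm
  rw [hlhs, binEntropy_one_add_div_two, binEntropy_one_add_div_two, binEntropy_one_add_div_two]
  linarith

lemma trace_mul_matFun {n : Type*} [Fintype n] [DecidableEq n] {A : Matrix n n ℂ}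
    (hA : A.IsHermitian) (f : ℝ → ℝ) :
    trace (A * matFun f A) = ∑ i, ((hA.eigenvalues i * f (hA.eigenvalues i) : ℝ) : ℂ) := by
  rw [matFun, dif_pos hA]
  set U : Matrix n n ℂ := (hA.eigenvectorUnitary : Matrix n n ℂ)
  set D : Matrix n n ℂ := diagonal fun i => (f (hA.eigenvalues i) : ℂ)
  have hdiag : star U * A * U = diagonal (fun i => (hA.eigenvalues i : ℂ)) := by
    simpa [Unitary.conjStarAlgAut_star_apply, Function.comp_def] using
      hA.conjStarAlgAut_star_eigenvectorUnitary
  rw [show A * (U * D * star U) = A * U * D * star U by noncomm_ring, trace_mul_comm,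
    show star U * (A * U * D) = star U * A * U * D by noncomm_ring, hdiag, diagonal_mul_diagonal,
    trace_diagonal]
  push_cast
  rfl

lemma vN_eq_sum_negMulLog {n : Type*} [Fintype n] [DecidableEq n] {A : Matrix n n ℂ}
    (hA : A.IsHermitian) : vN A = ∑ i, negMulLog (hA.eigenvalues i) := by
  rw [vN, matLog, trace_mul_matFun hA, ← Complex.ofReal_sum, Complex.ofReal_re,
    ← Finset.sum_neg_distrib]
  simp only [negMulLog, neg_mul]

lemma shannon_fin_two {p : Fin 2 → ℝ} {a : ℝ} (h₀ : p 0 = (1 + a) / 2)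
    (h₁ : p 1 = (1 - a) / 2) : shannon p = binEntropy ((1 + a) / 2) := by
  rw [shannon, binEntropy_eq_negMulLog_add_negMulLog_one_sub, Fin.sum_univ_two, h₀, h₁,
    negMulLog, negMulLog, show 1 - (1 + a) / 2 = (1 - a) / 2 by ring]
  ring

/-- For a Hermitian `ρ` of unit trace, `ρ = (1 + blochX ρ • X + blochY ρ • Y + blochZ ρ • Z) / 2`,
where `X, Y, Z` are the Pauli matrices. -/
def blochX (ρ : Matrix (Fin 2) (Fin 2) ℂ) : ℝ := 2 * (ρ 0 1).re

def blochY (ρ : Matrix (Fin 2) (Fin 2) ℂ) : ℝ := -2 * (ρ 0 1).im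

def blochZ (ρ : Matrix (Fin 2) (Fin 2) ℂ) : ℝ := (ρ 0 0).re - (ρ 1 1).re

section Qubit

variable {ρ : Matrix (Fin 2) (Fin 2) ℂ}

lemma re_add_re_of_trace_eq_one (htr : ρ.trace = 1) : (ρ 0 0).re + (ρ 1 1).re = 1 := by
  simpa [trace_fin_two] using congrArg Complex.re htr

lemma sqrt_two_div_two_mul_self : √2 / 2 * (√2 / 2) = 1 / 2 := by
  rw [div_mul_div_comm, mul_self_sqrt zero_le_two]
  norm_num

lemma re_trace_projVec_mul (hρ : ρ.IsHermitian) (v : Fin 2 → ℂ) :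
    (trace (projVec v * ρ)).re = Complex.normSq (v 0) * (ρ 0 0).re +
      Complex.normSq (v 1) * (ρ 1 1).re + 2 * (star (v 0) * v 1 * ρ 0 1).re := by
  have hdiag (i : Fin 2) : (ρ i i).im = 0 := Complex.conj_eq_iff_im.1 (hρ.apply i i)
  simp only [projVec, trace_fin_two, mul_apply, vecMulVec_apply, Pi.star_apply, RCLike.star_def,
    Fin.sum_univ_two, ← hρ.apply 1 0, Complex.add_re, Complex.mul_re, Complex.conj_re,
    Complex.conj_im, Complex.mul_im, hdiag, Complex.normSq_apply]
  ring

lemma shannon_xBasis (hρ : ρ.IsHermitian) (htr : ρ.trace = 1) :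
    shannon (fun j => (trace (projVec (xBasis j) * ρ)).re) = binEntropy ((1 + blochX ρ) / 2) := by
  have h := re_add_re_of_trace_eq_one htr
  refine shannon_fin_two ?_ ?_ <;>
    simp [re_trace_projVec_mul hρ, xBasis, blochX, sqrt_two_div_two_mul_self] <;> linarith

lemma shannon_yBasis (hρ : ρ.IsHermitian) (htr : ρ.trace = 1) :
    shannon (fun j => (trace (projVec (yBasis j) * ρ)).re) = binEntropy ((1 + blochY ρ) / 2) := by
  have h := re_add_re_of_trace_eq_one htr
  refine shannon_fin_two ?_ ?_ <;>
    simp [re_trace_projVec_mul hρ, yBasis, blochY, sqrt_two_div_two_mul_self] <;> linarith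

lemma shannon_zBasis (hρ : ρ.IsHermitian) (htr : ρ.trace = 1) :
    shannon (fun j => (trace (projVec (zBasis j) * ρ)).re) = binEntropy ((1 + blochZ ρ) / 2) := by
  have h := re_add_re_of_trace_eq_one htr
  refine shannon_fin_two ?_ ?_ <;>
    simp [re_trace_projVec_mul hρ, zBasis, blochZ] <;> linarith

lemma eigenvalues_zero_add_eigenvalues_one (hρ : ρ.IsHermitian) (htr : ρ.trace = 1) :
    hρ.eigenvalues 0 + hρ.eigenvalues 1 = 1 := by
  simpa [Fin.sum_univ_two, htr] using congrArg Complex.re hρ.trace_eq_sum_eigenvalues.symm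

lemma eigenvalues_zero_mul_eigenvalues_one (hρ : ρ.IsHermitian) :
    hρ.eigenvalues 0 * hρ.eigenvalues 1 =
      (ρ 0 0).re * (ρ 1 1).re - ((ρ 0 1).re ^ 2 + (ρ 0 1).im ^ 2) := by
  have hdiag (i : Fin 2) : (ρ i i).im = 0 := Complex.conj_eq_iff_im.1 (hρ.apply i i)
  have h := congrArg Complex.re hρ.det_eq_prod_eigenvalues
  simp [det_fin_two, Fin.prod_univ_two, ← hρ.apply 1 0, hdiag] at h
  linear_combination -h

lemma bloch_sq_eq (hρ : ρ.IsHermitian) (htr : ρ.trace = 1) :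
    blochX ρ ^ 2 + blochY ρ ^ 2 + blochZ ρ ^ 2 = (2 * hρ.eigenvalues 0 - 1) ^ 2 := by
  have hsum := eigenvalues_zero_add_eigenvalues_one hρ htr
  have hprod := eigenvalues_zero_mul_eigenvalues_one hρ
  have htr' := re_add_re_of_trace_eq_one htr
  rw [blochX, blochY, blochZ]
  linear_combination
    ((ρ 0 0).re + (ρ 1 1).re + 1) * htr' - 4 * hρ.eigenvalues 0 * hsum + 4 * hprod

lemma vN_eq_binEntropy_bloch (hρ : ρ.IsHermitian) (htr : ρ.trace = 1) :
    vN ρ = binEntropy ((1 + √(blochX ρ ^ 2 + blochY ρ ^ 2 + blochZ ρ ^ 2)) / 2) := by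
  rw [vN_eq_sum_negMulLog hρ, Fin.sum_univ_two, bloch_sq_eq hρ htr, sqrt_sq_eq_abs,
    binEntropy_one_add_abs_div_two,
    show (1 + (2 * hρ.eigenvalues 0 - 1)) / 2 = hρ.eigenvalues 0 by ring,
    binEntropy_eq_negMulLog_add_negMulLog_one_sub, ← eigenvalues_zero_add_eigenvalues_one hρ htr,
    add_sub_cancel_left]

lemma bloch_sq_le_one (hρ : IsDensity ρ) :
    blochX ρ ^ 2 + blochY ρ ^ 2 + blochZ ρ ^ 2 ≤ 1 := by
  have hsum := eigenvalues_zero_add_eigenvalues_one hρ.1.1 hρ.2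
  have h₀ : 0 ≤ hρ.1.1.eigenvalues 0 := hρ.1.eigenvalues_nonneg 0
  have h₁ : 0 ≤ hρ.1.1.eigenvalues 1 := hρ.1.eigenvalues_nonneg 1
  rw [bloch_sq_eq hρ.1.1 hρ.2]
  nlinarith [mul_nonneg h₀ h₁]

end Qubit

/-- qubit three-MUB uncertainty relation with mixedness:
`H(x) + H(y) + H(z) ≥ 2 log 2 + S(ρ)`. -/
theorem qubit_three_mub_uncertainty (ρ : Matrix (Fin 2) (Fin 2) ℂ) (hρ : IsDensity ρ) :
    shannon (fun j => (Matrix.trace (projVec (xBasis j) * ρ)).re) +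
    shannon (fun j => (Matrix.trace (projVec (yBasis j) * ρ)).re) +
    shannon (fun j => (Matrix.trace (projVec (zBasis j) * ρ)).re) ≥
      2 * Real.log 2 + vN ρ := by
  have hH : ρ.IsHermitian := hρ.1.1
  rw [shannon_xBasis hH hρ.2, shannon_yBasis hH hρ.2, shannon_zBasis hH hρ.2,
    vN_eq_binEntropy_bloch hH hρ.2]
  exact two_mul_log_two_add_binEntropy_le (bloch_sq_le_one hρ)
end
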